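/- For all a ∈ ℕ and all t ≥ a+1, the interim λ-weighted synthetic gradient unrolls as G_a^{λ|t} = G_a^{λ|a+1} + Σ_{b=a+1}^{t−1} (γλ)^{b−a} δ'_{a,b}. -/

import Mathlib

/-!
Replacing the bootstrap term `γⁿ u_{a+n} P(a+n,a)` of `G_a^{(n)}` by one more true step gives
`G_a^{(n+1)} = G_a^{(n)} + γⁿ δ'_{a,a+n}`. Lengthening the horizon from `H` to `H+1` moves the
weight `λ^m` (`m = H-a-1`) of `G_a^{(m+1)}` to `(1-λ)λ^m` on it and `λ^{m+1}` on `G_a^{(m+2)}`,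
so `G_a^{λ|H+1} - G_a^{λ|H} = λ^{m+1}(G_a^{(m+2)} - G_a^{(m+1)}) = (γλ)^{H-a} δ'_{a,H}`,
and the claim follows by summing these increments.
-/

open Finset Matrix

noncomputable section

/-- Propagator `Pfrom J a n = P(a+n, a) = J_{a+n-1} ⋯ J_a`. -/
def Pfrom {d : ℕ} (J : ℕ → Matrix (Fin d) (Fin d) ℝ) (a : ℕ) : ℕ → Matrix (Fin d) (Fin d) ℝ
  | 0 => 1
  | n + 1 => J (a + n) * Pfrom J a n

/-- Propagator `P J b a = P(b, a) = J_{b-1} ⋯ J_a` (for `b ≥ a`). -/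
def P {d : ℕ} (J : ℕ → Matrix (Fin d) (Fin d) ℝ) (b a : ℕ) : Matrix (Fin d) (Fin d) ℝ :=
  Pfrom J a (b - a)

/-- The n-step synthetic gradient `G_a^{(n)}`. -/
def Gn {d : ℕ} (γ : ℝ) (J : ℕ → Matrix (Fin d) (Fin d) ℝ) (c u : ℕ → Fin d → ℝ)
    (a n : ℕ) : Fin d → ℝ :=
  (∑ k ∈ Finset.range n, γ ^ k • Matrix.vecMul (c (a + k + 1)) (P J (a + k + 1) a))
    + γ ^ n • Matrix.vecMul (u (a + n)) (P J (a + n) a)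

/-- The interim λ-weighted synthetic gradient `G_a^{λ|H}`. -/
def GLam {d : ℕ} (γ lam : ℝ) (J : ℕ → Matrix (Fin d) (Fin d) ℝ) (c u : ℕ → Fin d → ℝ)
    (a H : ℕ) : Fin d → ℝ :=
  (1 - lam) • (∑ n ∈ Finset.range (H - a - 1), lam ^ n • Gn γ J c u a (n + 1))
    + lam ^ (H - a - 1) • Gn γ J c u a (H - a)

/-- The modified temporal-difference error `δ'_{a,t}`. -/
def δ' {d : ℕ} (γ : ℝ) (J : ℕ → Matrix (Fin d) (Fin d) ℝ) (c u : ℕ → Fin d → ℝ)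
    (a t : ℕ) : Fin d → ℝ :=
  Matrix.vecMul (c (t + 1) + γ • u (t + 1)) (P J (t + 1) a) - Matrix.vecMul (u t) (P J t a)

/-- The temporal-difference error `δ_t`. -/
def δtd {d : ℕ} (γ : ℝ) (J : ℕ → Matrix (Fin d) (Fin d) ℝ) (c u w : ℕ → Fin d → ℝ)
    (t : ℕ) : Fin d → ℝ :=
  Matrix.vecMul (c (t + 1) + γ • u (t + 1)) (P J (t + 1) t) - w t

/-- `δ_{a,t} = δ_t P(t,a)`. -/
def δab {d : ℕ} (γ : ℝ) (J : ℕ → Matrix (Fin d) (Fin d) ℝ) (c u w : ℕ → Fin d → ℝ)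
    (a t : ℕ) : Fin d → ℝ :=
  Matrix.vecMul (δtd γ J c u w t) (P J t a)

lemma Gn_succ {d : ℕ} (γ : ℝ) (J : ℕ → Matrix (Fin d) (Fin d) ℝ) (c u : ℕ → Fin d → ℝ)
    (a n : ℕ) :
    Gn γ J c u a (n + 1) = Gn γ J c u a n + γ ^ n • δ' γ J c u a (a + n) := by
  unfold Gn δ'
  rw [Finset.sum_range_succ, ← add_assoc a n 1]
  simp only [Matrix.add_vecMul, Matrix.smul_vecMul]
  module

lemma GLam_succ {d : ℕ} (γ lam : ℝ) (J : ℕ → Matrix (Fin d) (Fin d) ℝ)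
    (c u : ℕ → Fin d → ℝ) (a t : ℕ) (ht : a + 1 ≤ t) :
    GLam γ lam J c u a (t + 1)
      = GLam γ lam J c u a t + (γ * lam) ^ (t - a) • δ' γ J c u a t := by
  obtain ⟨m, rfl⟩ : ∃ m, t = a + 1 + m := ⟨t - (a + 1), by omega⟩
  have horizon_lengths : a + 1 + m + 1 - a - 1 = m + 1 ∧ a + 1 + m - a - 1 = m ∧
      a + 1 + m + 1 - a = m + 1 + 1 ∧ a + 1 + m - a = m + 1 ∧ a + (m + 1) = a + 1 + m := by
    omega
  obtain ⟨e₁, e₂, e₃, e₄, e₅⟩ := horizon_lengths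
  unfold GLam
  rw [e₁, e₂, e₃, e₄, Finset.sum_range_succ, Gn_succ γ J c u a (m + 1), e₅, mul_pow]
  module

theorem interim_lambda_unroll_general {d : ℕ} (γ lam : ℝ)
    (J : ℕ → Matrix (Fin d) (Fin d) ℝ) (c u : ℕ → Fin d → ℝ)
    (a t : ℕ) (h : a + 1 ≤ t) :
    GLam γ lam J c u a t
      = GLam γ lam J c u a (a + 1)
        + ∑ b ∈ Finset.Icc (a + 1) (t - 1), (γ * lam) ^ (b - a) • δ' γ J c u a b := by
  induction t, h using Nat.le_induction with
  | base => simp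
  | succ t ht ih =>
    obtain ⟨s, rfl⟩ : ∃ s, t = s + 1 := ⟨t - 1, by omega⟩
    rw [GLam_succ γ lam J c u a (s + 1) ht, ih, Nat.add_sub_cancel, Nat.add_sub_cancel,
      Finset.sum_Icc_succ_top ht, add_assoc]

/-- the interim λ-weighted synthetic gradient unrolls as
`G_a^{λ|t} = G_a^{λ|a+1} + Σ_{b=a+1}^{t−1} (γλ)^{b−a} δ'_{a,b}`. -/
theorem interim_lambda_unroll {d : ℕ} (γ lam : ℝ)
    (J : ℕ → Matrix (Fin d) (Fin d) ℝ) (c u w : ℕ → Fin d → ℝ)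
    (a t : ℕ) (h : a + 1 ≤ t) :
    GLam γ lam J c u a t
      = GLam γ lam J c u a (a + 1)
        + ∑ b ∈ Finset.Icc (a + 1) (t - 1), (γ * lam) ^ (b - a) • δ' γ J c u a b :=
  interim_lambda_unroll_general γ lam J c u a t h

end
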